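/- arXiv:0803.2111 — 8 statements merged into one kernel-verified Lean document; each statement's English description precedes it below -/
import Mathlib

section
/- Let r : (0,1] × [0,1] → ℝ be continuous, α ∈ (0,1], and G : [0,1] → ℝ continuous and nondecreasing. Suppose τ ∈ (0,1) satisfies G(τ) = r(α,τ), G(u) > r(α,u) for all u ∈ (0,τ), and G(u) < r(α,u) for all u ∈ (τ,1]. For each t > 0 let F_t : [0,1] → ℝ be right-continuous with left limits with ‖F_t − G‖_∞ → 0 as t → 0⁺, and let α_t ∈ (0,1] with α_t → α, and assume the set {u ∈ [0,1] : F_t(u) ≥ r(α_t,u)} is nonempty. Then U(F_t,α_t) = sup{u ∈ [0,1] : F_t(u) ≥ r(α_t,u)} converges to τ as t → 0⁺. -/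
open Filter Set

/-- A cadlag function on `[0,1]`: right-continuous on `[0,1)` and with left limits
at every point of `(0,1]`. -/
def Cadlag (f : ℝ → ℝ) : Prop :=
  (∀ x ∈ Set.Ico (0:ℝ) 1, ContinuousWithinAt f (Set.Ici x) x) ∧
  (∀ x ∈ Set.Ioc (0:ℝ) 1, ∃ l, Filter.Tendsto f (nhdsWithin x (Set.Iio x)) (nhds l))

/-- Convergence in sup norm on `[0,1]` as `t → 0⁺`. -/
def SupConv (Ht : ℝ → ℝ → ℝ) (H : ℝ → ℝ) : Prop :=
  ∀ ε > (0:ℝ), ∀ᶠ t in nhdsWithin (0:ℝ) (Set.Ioi 0),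
    ∀ x ∈ Set.Icc (0:ℝ) 1, |Ht t x - H x| ≤ ε

/-- continuity of the threshold map: if `τ ∈ (0,1)` is the unique
interior right crossing point of `G` and `r(α,·)`, and cadlag `F_t → G` in sup norm,
`α_t → α`, then `U(F_t,α_t) → τ`. -/
theorem stmt_4 (r : ℝ → ℝ → ℝ) (α : ℝ) (G : ℝ → ℝ) (τ : ℝ)
    (Ft : ℝ → ℝ → ℝ) (αt : ℝ → ℝ)
    (hr : ContinuousOn (Function.uncurry r) (Set.Ioc (0:ℝ) 1 ×ˢ Set.Icc (0:ℝ) 1))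
    (hα : α ∈ Set.Ioc (0:ℝ) 1)
    (hGc : ContinuousOn G (Set.Icc 0 1))
    (hGmono : MonotoneOn G (Set.Icc 0 1))
    (hτ : τ ∈ Set.Ioo (0:ℝ) 1)
    (hcross : G τ = r α τ)
    (hbelow : ∀ u ∈ Set.Ioo (0:ℝ) τ, G u > r α u)
    (habove : ∀ u ∈ Set.Ioc τ 1, G u < r α u)
    (hFt : ∀ t ∈ Set.Ioi (0:ℝ), Cadlag (Ft t))
    (hαt : ∀ t ∈ Set.Ioi (0:ℝ), αt t ∈ Set.Ioc (0:ℝ) 1)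
    (hFconv : SupConv Ft G)
    (hαconv : Filter.Tendsto αt (nhdsWithin (0:ℝ) (Set.Ioi 0)) (nhds α))
    (hnet : ∀ t ∈ Set.Ioi (0:ℝ), {u ∈ Set.Icc (0:ℝ) 1 | Ft t u ≥ r (αt t) u}.Nonempty) :
    Filter.Tendsto
      (fun t => sSup {u ∈ Set.Icc (0:ℝ) 1 | Ft t u ≥ r (αt t) u})
      (nhdsWithin (0:ℝ) (Set.Ioi 0)) (nhds τ) := by
  rw [Metric.tendsto_nhds]
  intro ε hε
  obtain ⟨hτ0, hτ1⟩ := hτ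
  set ε₀ : ℝ := min (ε/2) (min (τ/2) ((1-τ)/2)) with hε₀def
  have hε₀pos : 0 < ε₀ := lt_min (by linarith) (lt_min (by linarith) (by linarith))
  have hε₀τ : ε₀ ≤ τ/2 := (min_le_right _ _).trans (min_le_left _ _)
  have hε₀1 : ε₀ ≤ (1-τ)/2 := (min_le_right _ _).trans (min_le_right _ _)
  have hε₀ε : ε₀ ≤ ε/2 := min_le_left _ _
  -- continuity of u ↦ r α u on [0,1]
  have hrα : ContinuousOn (fun u => r α u) (Set.Icc 0 1) := by
    have : ContinuousOn (fun u => Function.uncurry r (α, u)) (Set.Icc (0:ℝ) 1) := by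
      apply hr.comp ((continuous_const.prodMk continuous_id).continuousOn)
      intro u hu
      exact ⟨⟨hα.1, hα.2⟩, hu⟩
    exact this
  -- lower crossing point
  set u₀ : ℝ := τ - ε₀ with hu₀def
  have hu₀mem : u₀ ∈ Set.Icc (0:ℝ) 1 := ⟨by linarith, by linarith⟩
  have hδ'pos : 0 < G u₀ - r α u₀ := by
    have := hbelow u₀ ⟨by linarith, by linarith⟩
    linarith
  set δ' : ℝ := G u₀ - r α u₀ with hδ'def
  -- min of r α - G over [τ+ε₀, 1]
  have hKne : (Set.Icc (τ+ε₀) 1).Nonempty := ⟨τ+ε₀, le_refl _, by linarith⟩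
  have hsub01 : Set.Icc (τ+ε₀) 1 ⊆ Set.Icc (0:ℝ) 1 := Set.Icc_subset_Icc (by linarith) le_rfl
  have hcont : ContinuousOn (fun u => r α u - G u) (Set.Icc (τ+ε₀) 1) :=
    (hrα.mono hsub01).sub (hGc.mono hsub01)
  obtain ⟨u₁, hu₁, hmin'⟩ := isCompact_Icc.exists_isMinOn hKne hcont
  have hmin : ∀ x ∈ Set.Icc (τ+ε₀) 1, r α u₁ - G u₁ ≤ r α x - G x := fun x hx => hmin' hx
  set δ : ℝ := r α u₁ - G u₁ with hδdef
  have hδpos : 0 < δ := by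
    have := habove u₁ ⟨by linarith [hu₁.1], hu₁.2⟩
    simp only [hδdef]; linarith
  set m : ℝ := min δ δ' with hmdef
  have hmpos : 0 < m := lt_min hδpos hδ'pos
  have hmδ : m ≤ δ := min_le_left _ _
  have hmδ' : m ≤ δ' := min_le_right _ _
  -- uniform continuity of r on [α/2,1] × [0,1]
  have hKcomp : IsCompact (Set.Icc (α/2) 1 ×ˢ Set.Icc (0:ℝ) 1) :=
    isCompact_Icc.prod isCompact_Icc
  have hKsub : Set.Icc (α/2) 1 ×ˢ Set.Icc (0:ℝ) 1 ⊆ Set.Ioc (0:ℝ) 1 ×ˢ Set.Icc (0:ℝ) 1 := by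
    rintro ⟨a, b⟩ ⟨⟨ha1, ha2⟩, hb⟩
    exact ⟨⟨by linarith [hα.1], ha2⟩, hb⟩
  have huc := hKcomp.uniformContinuousOn_of_continuous (hr.mono hKsub)
  obtain ⟨δu, hδupos, hucρ⟩ := Metric.uniformContinuousOn_iff.mp huc (m/3) (by positivity)
  -- combine the eventual facts
  filter_upwards [hFconv (m/3) (by positivity),
    (Metric.tendsto_nhds.mp hαconv) δu hδupos,
    hαconv.eventually (eventually_gt_nhds (by linarith [hα.1] : α/2 < α)),
    self_mem_nhdsWithin] with t hF hd hhalf ht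
  have hαt' := hαt t ht
  set S : Set ℝ := {u ∈ Set.Icc (0:ℝ) 1 | Ft t u ≥ r (αt t) u} with hSdef
  have hbdd : BddAbove S := ⟨1, fun x hx => hx.1.2⟩
  -- key uniform estimate
  have hkey : ∀ u ∈ Set.Icc (0:ℝ) 1, |r (αt t) u - r α u| < m/3 := by
    intro u hu
    have hp : (αt t, u) ∈ Set.Icc (α/2) 1 ×ˢ Set.Icc (0:ℝ) 1 :=
      ⟨⟨le_of_lt hhalf, hαt'.2⟩, hu⟩
    have hq : (α, u) ∈ Set.Icc (α/2) 1 ×ˢ Set.Icc (0:ℝ) 1 :=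
      ⟨⟨by linarith [hα.1], hα.2⟩, hu⟩
    have hdist : dist ((αt t, u) : ℝ × ℝ) (α, u) < δu := by
      rw [Prod.dist_eq]
      exact max_lt hd (by simpa using hδupos)
    have := hucρ _ hp _ hq hdist
    simpa [Real.dist_eq, Function.uncurry] using this
  -- lower bound: u₀ ∈ S
  have hFu₀ := hF u₀ hu₀mem
  have hr₀ := hkey u₀ hu₀mem
  have hu₀S : u₀ ∈ S := by
    refine ⟨hu₀mem, ?_⟩
    have h1 : Ft t u₀ ≥ G u₀ - m/3 := by
      have := abs_le.mp hFu₀; linarith [this.1]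
    have h2 : r (αt t) u₀ ≤ r α u₀ + m/3 := by
      have := abs_lt.mp hr₀; linarith [this.2]
    have : r α u₀ = G u₀ - δ' := by simp [hδ'def]
    linarith
  have hlow : τ - ε₀ ≤ sSup S := le_csSup hbdd hu₀S
  -- upper bound
  have hup : sSup S ≤ τ + ε₀ := by
    apply Real.sSup_le _ (by linarith)
    intro x hx
    by_contra hcon
    push_neg at hcon
    have hx01 : x ∈ Set.Icc (0:ℝ) 1 := hx.1
    have hxK : x ∈ Set.Icc (τ+ε₀) 1 := ⟨le_of_lt hcon, hx01.2⟩
    have hδx : δ ≤ r α x - G x := hmin x hxK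
    have hFx := hF x hx01
    have hrx := hkey x hx01
    have h1 : Ft t x ≤ G x + m/3 := by
      have := abs_le.mp hFx; linarith [this.2]
    have h2 : r (αt t) x ≥ r α x - m/3 := by
      have := abs_lt.mp hrx; linarith [this.1]
    have h3 : Ft t x ≥ r (αt t) x := hx.2
    linarith
  rw [Real.dist_eq, abs_lt]
  constructor <;> linarith
end

section
/- Let r : [0,1] → ℝ be continuous, let G : [0,1] → ℝ be continuous and nondecreasing, and let v ∈ (0,1) satisfy G(v) = r(v), G(u) > r(u) for all u ∈ (0,v), and G(u) < r(u) for all u ∈ (v,1]. Assume G and r are both differentiable at v with r'(v) > G'(v). Let H : [0,1] → ℝ be continuous and for each t > 0 let H_t : [0,1] → ℝ be right-continuous with left limits with ‖H_t − H‖_∞ → 0 as t → 0⁺. Then for all sufficiently small t > 0 the set {u ∈ [0,1] : G(u) + t·H_t(u) ≥ r(u)} is nonempty, and, denoting its supremum by v_t, one has (v_t − v)/t → H(v)/(r'(v) − G'(v)) as t → 0⁺. -/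
open Filter Set

/-!
Put `φ = r - G`: it vanishes at `v`, has slope `D = r'(v) - G'(v) > 0` there and is positive on
`(v, 1]`, and `v_t = sup {u : φ u ≤ t H_t(u)}`. Along the line `u = v + t a` one has
`φ u ≈ t D a` and `t H_t(u) ≈ t H(v)`, so `v + t a` lies in the set once `D a < H(v)`. Conversely,
if `D b > H(v)` no `u > v + t b` lies in it: near `v` by the same linearisation (now uniform in
`u`), away from `v` because `φ` has a positive minimum on `[v + δ, 1]` while `t H_t = O(t)`
uniformly. Hence `(v_t - v)/t` is squeezed to `H(v)/D`.
-/

open Topology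

section

variable {φ H : ℝ → ℝ} {h : ℝ → ℝ → ℝ} {v D : ℝ}

theorem SupConv.eventually_mul_lt (hconv : SupConv h H) (hH : ContinuousOn H (Icc 0 1))
    {m : ℝ} (hm : 0 < m) : ∀ᶠ t in 𝓝[>] 0, ∀ u ∈ Icc (0:ℝ) 1, t * h t u < m := by
  obtain ⟨M, hM⟩ := isCompact_Icc.exists_bound_of_continuousOn hH
  have hM1 : 0 < M + 1 := by linarith [(norm_nonneg _).trans (hM 0 ⟨le_rfl, zero_le_one⟩)]
  have ht : ∀ᶠ t in 𝓝[>] (0:ℝ), t < m / (M + 1) :=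
    nhdsWithin_le_nhds (Iio_mem_nhds (div_pos hm hM1))
  filter_upwards [hconv 1 one_pos, ht, self_mem_nhdsWithin] with t hclose ht (htpos : 0 < t) u hu
  have hbound : h t u ≤ M + 1 := by
    linarith [le_abs_self (h t u - H u), le_abs_self (H u), Real.norm_eq_abs (H u) ▸ hM u hu,
      hclose u hu]
  calc t * h t u ≤ t * (M + 1) := mul_le_mul_of_nonneg_left hbound htpos.le
    _ < m := (lt_div_iff₀ hM1).1 ht

theorem SupConv.tendsto_comp (hconv : SupConv h H) {x : ℝ}
    (hH : ContinuousWithinAt H (Icc 0 1) x) {f : ℝ → ℝ}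
    (hf : Tendsto f (𝓝[>] 0) (𝓝[Icc 0 1] x)) :
    Tendsto (fun t => h t (f t)) (𝓝[>] 0) (𝓝 (H x)) := by
  have hdiff : Tendsto (fun t => h t (f t) - H (f t)) (𝓝[>] 0) (𝓝 0) := by
    refine Metric.tendsto_nhds.2 fun ε hε => ?_
    filter_upwards [hconv (ε / 2) (half_pos hε), hf self_mem_nhdsWithin] with t hclose hft
    rw [Real.dist_eq, sub_zero]
    linarith [hclose (f t) hft]
  simpa using hdiff.add (hH.tendsto.comp hf)

theorem HasDerivAt.tendsto_div_of_eq_zero (hφ : HasDerivAt φ D v)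
    (hφv : φ v = 0) (a : ℝ) :
    Tendsto (fun t => φ (v + t * a) / t) (𝓝[>] 0) (𝓝 (D * a)) := by
  have hline : HasDerivAt (fun t => φ (v + t * a)) (D * a) 0 := by
    have := ((hasDerivAt_id (0:ℝ)).mul_const a).const_add v
    simp only [id, one_mul] at this
    exact hφ.scomp_of_eq 0 this (by simp) |>.congr_deriv (by simp [mul_comm])
  simpa [hφv, div_eq_inv_mul] using hline.tendsto_slope_zero_right

theorem eventually_lt_perturbation_of_mul_lt (hφ : HasDerivAt φ D v) (hφv : φ v = 0)
    (hv : v ∈ Ioo (0:ℝ) 1) (hconv : SupConv h H) (hH : ContinuousOn H (Icc 0 1))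
    {a : ℝ} (ha : D * a < H v) :
    ∀ᶠ t in 𝓝[>] 0, v + t * a ∈ Icc (0:ℝ) 1 ∧ φ (v + t * a) < t * h t (v + t * a) := by
  have hIcc : Icc (0:ℝ) 1 ∈ 𝓝 v := Icc_mem_nhds hv.1 hv.2
  have hline : Tendsto (fun t : ℝ => v + t * a) (𝓝[>] 0) (𝓝 v) :=
    tendsto_nhdsWithin_of_tendsto_nhds
      (by simpa using (continuous_mul_const a).const_add v |>.tendsto 0)
  have hmem : ∀ᶠ t in 𝓝[>] (0:ℝ), v + t * a ∈ Icc (0:ℝ) 1 := hline hIcc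
  have hgap : Tendsto (fun t => h t (v + t * a) - φ (v + t * a) / t) (𝓝[>] 0)
      (𝓝 (H v - D * a)) :=
    (hconv.tendsto_comp (hH v (mem_of_mem_nhds hIcc))
      (tendsto_nhdsWithin_iff.2 ⟨hline, hmem⟩)).sub (hφ.tendsto_div_of_eq_zero hφv a)
  filter_upwards [hmem, hgap.eventually (lt_mem_nhds (sub_pos.2 ha)), self_mem_nhdsWithin]
    with t hmem hpos (htpos : 0 < t)
  refine ⟨hmem, ?_⟩
  have := mul_lt_mul_of_pos_left hpos htpos
  rwa [mul_zero, mul_sub, mul_div_cancel₀ _ htpos.ne', sub_pos] at this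

theorem eventually_le_of_le_perturbation (hφ : HasDerivAt φ D v) (hφv : φ v = 0) (hD : 0 < D)
    (hφc : ContinuousOn φ (Icc 0 1)) (hpos : ∀ u ∈ Ioc v 1, 0 < φ u)
    (hv : v ∈ Ioo (0:ℝ) 1) (hconv : SupConv h H) (hH : ContinuousOn H (Icc 0 1))
    {b : ℝ} (hb : H v < D * b) :
    ∀ᶠ t in 𝓝[>] 0, ∀ u ∈ Icc (0:ℝ) 1, φ u ≤ t * h t u → u ≤ v + t * b := by
  set η := min (D / 2) ((D * b - H v) / (|b| + 2))
  have hη : 0 < η := lt_min (half_pos hD) (div_pos (sub_pos.2 hb) (by positivity))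
  have hηD : η < D := (min_le_left _ _).trans_lt (half_lt_self hD)
  have hηb : η * (|b| + 2) ≤ D * b - H v := (le_div_iff₀ (by positivity)).1 (min_le_right _ _)
  have hnear : ∀ᶠ u in 𝓝 v, D * (u - v) - η * |u - v| ≤ φ u ∧ H u ≤ H v + η := by
    have hslope := (hasDerivAt_iff_isLittleO.1 hφ).def hη
    have hHv := (hH.continuousAt (Icc_mem_nhds hv.1 hv.2)).eventually
      (Metric.closedBall_mem_nhds (H v) hη)
    filter_upwards [hslope, hHv] with u hu hHu
    rw [hφv, Real.norm_eq_abs, Real.norm_eq_abs, smul_eq_mul] at hu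
    rw [Real.dist_eq] at hHu
    constructor <;> linarith [abs_le.1 hu, abs_le.1 hHu, mul_comm (u - v) D]
  obtain ⟨δ, hδ, hδnear⟩ := Metric.eventually_nhds_iff.1 hnear
  obtain ⟨m, hm, hfar⟩ := (isCompact_Icc (a := v + δ) (b := 1)).exists_forall_le'
    (hφc.mono (Icc_subset_Icc (by linarith [hv.1]) le_rfl))
    (fun u hu => hpos u ⟨by linarith [hu.1], hu.2⟩)
  have htb : ∀ᶠ t in 𝓝[>] (0:ℝ), t * |b| < δ := by
    have : Tendsto (fun t : ℝ => t * |b|) (𝓝[>] 0) (𝓝 0) :=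
      tendsto_nhdsWithin_of_tendsto_nhds (by simpa using (continuous_mul_const |b|).tendsto 0)
    exact this.eventually (gt_mem_nhds hδ)
  filter_upwards [hconv η hη, hconv.eventually_mul_lt hH hm, htb, self_mem_nhdsWithin]
    with t hclose hsmall htb (htpos : 0 < t) u hu hle
  by_contra! hlt
  rcases lt_or_ge u (v + δ) with hu_near | hu_far
  · have hdist : dist u v < δ := by
      rw [Real.dist_eq, abs_lt]
      constructor <;> nlinarith [neg_abs_le b]
    obtain ⟨hφu, hHu⟩ := hδnear hdist
    have hht : h t u ≤ H v + 2 * η := by linarith [(abs_le.1 (hclose u hu)).2]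
    have habs : |u - v| ≤ (u - (v + t * b)) + t * |b| := by
      rw [abs_le]; constructor <;> nlinarith [neg_abs_le b, le_abs_self b]
    -- `φ u ≥ (D - η)(u - v - t b) + t (D b - η (|b| + 2)) > t (H v + 2 η) ≥ t h t u`
    nlinarith [mul_le_mul_of_nonneg_left hht htpos.le, mul_le_mul_of_nonneg_left habs hη.le]
  · exact (hsmall u hu).not_ge (hle.trans' (hfar u ⟨hu_far, hu.2⟩))

theorem tendsto_sSup_threshold (hφ : HasDerivAt φ D v) (hφv : φ v = 0) (hD : 0 < D)
    (hφc : ContinuousOn φ (Icc 0 1)) (hpos : ∀ u ∈ Ioc v 1, 0 < φ u)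
    (hv : v ∈ Ioo (0:ℝ) 1) (hconv : SupConv h H) (hH : ContinuousOn H (Icc 0 1)) :
    (∀ᶠ t in 𝓝[>] 0, {u ∈ Icc (0:ℝ) 1 | φ u ≤ t * h t u}.Nonempty) ∧
    Tendsto (fun t => (sSup {u ∈ Icc (0:ℝ) 1 | φ u ≤ t * h t u} - v) / t) (𝓝[>] 0)
      (𝓝 (H v / D)) := by
  have hlower (a : ℝ) (ha : a < H v / D) :
      ∀ᶠ t in 𝓝[>] 0, v + t * a ∈ {u ∈ Icc (0:ℝ) 1 | φ u ≤ t * h t u} :=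
    (eventually_lt_perturbation_of_mul_lt hφ hφv hv hconv hH ((lt_div_iff₀' hD).1 ha)).mono
      fun _ ht => ⟨ht.1, ht.2.le⟩
  have hne : ∀ᶠ t in 𝓝[>] 0, {u ∈ Icc (0:ℝ) 1 | φ u ≤ t * h t u}.Nonempty :=
    (hlower _ (sub_one_lt _)).mono fun _ ht => ⟨_, ht⟩
  refine ⟨hne, tendsto_order.2 ⟨fun a ha => ?_, fun b hb => ?_⟩⟩
  · obtain ⟨a', haa', ha'⟩ := exists_between ha
    filter_upwards [hlower a' ha', self_mem_nhdsWithin] with t ht (htpos : 0 < t)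
    refine haa'.trans_le ((le_div_iff₀ htpos).2 ?_)
    linarith [le_csSup (bddAbove_Icc.mono (sep_subset _ fun u => φ u ≤ t * h t u)) ht]
  · obtain ⟨b', hb', hbb'⟩ := exists_between hb
    filter_upwards [eventually_le_of_le_perturbation hφ hφv hD hφc hpos hv hconv hH
      ((div_lt_iff₀' hD).1 hb'), hne, self_mem_nhdsWithin] with t hupper hne (htpos : 0 < t)
    refine ((div_le_iff₀ htpos).2 ?_).trans_lt hbb'
    linarith [csSup_le hne fun u hu => hupper u hu.1 hu.2]

end

theorem stmt_5_general (r G : ℝ → ℝ) (v g' r' : ℝ) (H : ℝ → ℝ) (Ht : ℝ → ℝ → ℝ)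
    (hr : ContinuousOn r (Set.Icc 0 1))
    (hGc : ContinuousOn G (Set.Icc 0 1))
    (hv : v ∈ Set.Ioo (0:ℝ) 1)
    (hcross : G v = r v)
    (habove : ∀ u ∈ Set.Ioc v 1, G u < r u)
    (hG' : HasDerivWithinAt G g' (Set.Icc 0 1) v)
    (hr' : HasDerivWithinAt r r' (Set.Icc 0 1) v)
    (hslope : r' > g')
    (hHc : ContinuousOn H (Set.Icc 0 1))
    (hconv : SupConv Ht H) :
    (∀ᶠ t in nhdsWithin (0:ℝ) (Set.Ioi 0),
      {u ∈ Set.Icc (0:ℝ) 1 | G u + t * Ht t u ≥ r u}.Nonempty) ∧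
    Filter.Tendsto
      (fun t => (sSup {u ∈ Set.Icc (0:ℝ) 1 | G u + t * Ht t u ≥ r u} - v) / t)
      (nhdsWithin (0:ℝ) (Set.Ioi 0)) (nhds (H v / (r' - g'))) := by
  have hIcc : Icc (0:ℝ) 1 ∈ 𝓝 v := Icc_mem_nhds hv.1 hv.2
  have hsets (t : ℝ) : {u ∈ Icc (0:ℝ) 1 | G u + t * Ht t u ≥ r u} =
      {u ∈ Icc (0:ℝ) 1 | r u - G u ≤ t * Ht t u} := by
    simp only [ge_iff_le, sub_le_iff_le_add']
  simp only [hsets]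
  exact tendsto_sSup_threshold ((hr'.hasDerivAt hIcc).sub (hG'.hasDerivAt hIcc))
    (sub_eq_zero.2 hcross.symm) (sub_pos.2 hslope) (hr.sub hGc)
    (fun u hu => sub_pos.2 (habove u hu)) hv hconv hHc

/-- Hadamard differentiability (tangentially to continuous functions)
of the thresholding map `F ↦ sup{u ∈ [0,1] : F(u) ≥ r(u)}` at `G`:
`(v_t − v)/t → H(v)/(r'(v) − G'(v))`, where `v_t` is the threshold of
`G + t·H_t`. -/
theorem stmt_5 (r G : ℝ → ℝ) (v g' r' : ℝ) (H : ℝ → ℝ) (Ht : ℝ → ℝ → ℝ)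
    (hr : ContinuousOn r (Set.Icc 0 1))
    (hGc : ContinuousOn G (Set.Icc 0 1))
    (hGmono : MonotoneOn G (Set.Icc 0 1))
    (hv : v ∈ Set.Ioo (0:ℝ) 1)
    (hcross : G v = r v)
    (hbelow : ∀ u ∈ Set.Ioo (0:ℝ) v, G u > r u)
    (habove : ∀ u ∈ Set.Ioc v 1, G u < r u)
    (hG' : HasDerivWithinAt G g' (Set.Icc 0 1) v)
    (hr' : HasDerivWithinAt r r' (Set.Icc 0 1) v)
    (hslope : r' > g')
    (hHc : ContinuousOn H (Set.Icc 0 1))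
    (hHt : ∀ t ∈ Set.Ioi (0:ℝ), Cadlag (Ht t))
    (hconv : SupConv Ht H) :
    (∀ᶠ t in nhdsWithin (0:ℝ) (Set.Ioi 0),
      {u ∈ Set.Icc (0:ℝ) 1 | G u + t * Ht t u ≥ r u}.Nonempty) ∧
    Filter.Tendsto
      (fun t => (sSup {u ∈ Set.Icc (0:ℝ) 1 | G u + t * Ht t u ≥ r u} - v) / t)
      (nhdsWithin (0:ℝ) (Set.Ioi 0)) (nhds (H v / (r' - g'))) :=
  stmt_5_general r G v g' r' H Ht hr hGc hv hcross habove hG' hr' hslope hHc hconv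
end

section
/- Let π0 ∈ [0,1], let G0 be the identity function on [0,1], let G1 : [0,1] → ℝ, and set G = π0·G0 + (1−π0)·G1. Let T be a map from functions [0,1] → ℝ to [0,1] with τ* = T(G), Hadamard-differentiable at G tangentially to continuous functions with derivative Ṫ: for every continuous H : [0,1] → ℝ and every family (H_t)_{t>0} of cadlag functions with ‖H_t − H‖_∞ → 0 as t → 0⁺, one has (T(G + t·H_t) − T(G))/t → Ṫ(H). Define V(F0,F1) = π0·F0(T(π0·F0 + (1−π0)·F1)). Then for all continuous H0, H1 : [0,1] → ℝ and all families (H_{0,t})_{t>0}, (H_{1,t})_{t>0} of cadlag functions with ‖H_{0,t} − H0‖_∞ → 0 and ‖H_{1,t} − H1‖_∞ → 0, one has (V(G0 + t·H_{0,t}, G1 + t·H_{1,t}) − V(G0,G1))/t → π0·Ṫ(π0·H0 + (1−π0)·H1) + π0·H0(τ*) as t → 0⁺. -/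
/-
Write `G = π0·id + (1−π0)·G1` and `τ_t = T(π0·F0 + (1−π0)·F1)` for the perturbed pair
`F_i = G_i + t·H_{i,t}`. Since `π0·F0 + (1−π0)·F1 = G + t·(π0·H_{0,t} + (1−π0)·H_{1,t})` and
the mixed perturbation is again cadlag and converges uniformly to `π0·H0 + (1−π0)·H1`,
Hadamard differentiability of `T` gives `(τ_t − τ*)/t → Ṫ(π0·H0 + (1−π0)·H1)`, in particular
`τ_t → τ*`. As `G0 = id`, `F0(τ_t) = τ_t + t·H_{0,t}(τ_t)`, and `H_{0,t}(τ_t) → H0(τ*)` by uniform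
convergence and continuity of `H0`; the two limits add up to the derivative of `V`.
-/

open Filter Set

open Topology

theorem Cadlag.add {f g : ℝ → ℝ} (hf : Cadlag f) (hg : Cadlag g) :
    Cadlag (fun x => f x + g x) := by
  refine ⟨fun x hx => (hf.1 x hx).add (hg.1 x hx), fun x hx => ?_⟩
  obtain ⟨a, ha⟩ := hf.2 x hx
  obtain ⟨b, hb⟩ := hg.2 x hx
  exact ⟨a + b, ha.add hb⟩

theorem Cadlag.const_mul {f : ℝ → ℝ} (c : ℝ) (hf : Cadlag f) : Cadlag (fun x => c * f x) := by
  refine ⟨fun x hx => continuousWithinAt_const.mul (hf.1 x hx), fun x hx => ?_⟩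
  obtain ⟨a, ha⟩ := hf.2 x hx
  exact ⟨c * a, ha.const_mul c⟩

theorem supConv_iff_tendstoUniformlyOn {Ht : ℝ → ℝ → ℝ} {H : ℝ → ℝ} :
    SupConv Ht H ↔ TendstoUniformlyOn Ht H (𝓝[>] 0) (Icc 0 1) := by
  rw [Metric.tendstoUniformlyOn_iff]
  constructor
  · intro h ε hε
    filter_upwards [h (ε / 2) (half_pos hε)] with t ht x hx
    rw [dist_comm, Real.dist_eq]
    linarith [ht x hx]
  · intro h ε hε
    filter_upwards [h ε hε] with t ht x hx
    rw [← Real.dist_eq, dist_comm]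
    exact (ht x hx).le

theorem SupConv.linear_combination {H0t H1t : ℝ → ℝ → ℝ} {H0 H1 : ℝ → ℝ}
    (h0 : SupConv H0t H0) (h1 : SupConv H1t H1) (a b : ℝ) :
    SupConv (fun t x => a * H0t t x + b * H1t t x) (fun x => a * H0 x + b * H1 x) := by
  rw [supConv_iff_tendstoUniformlyOn] at *
  exact ((Real.uniformContinuous_const_mul (x := a)).comp_tendstoUniformlyOn h0).add
    ((Real.uniformContinuous_const_mul (x := b)).comp_tendstoUniformlyOn h1)

theorem tendsto_of_tendsto_sub_div {l : Filter ℝ} (hl : l ≤ 𝓝[≠] 0) {f : ℝ → ℝ} {c D : ℝ}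
    (h : Tendsto (fun t => (f t - c) / t) l (𝓝 D)) : Tendsto f l (𝓝 c) := by
  have hlim : Tendsto (fun t => c + t * ((f t - c) / t)) l (𝓝 (c + 0 * D)) :=
    tendsto_const_nhds.add ((tendsto_id.mono_left (hl.trans nhdsWithin_le_nhds)).mul h)
  rw [zero_mul, add_zero] at hlim
  refine hlim.congr' ?_
  filter_upwards [hl self_mem_nhdsWithin] with t (ht : t ≠ 0)
  field_simp
  ring

/-- Chain rule for `(F, τ) ↦ F τ` at `(id, τ*)`, along `F_t = id + t·H_t` with `H_t → H`
uniformly on a set containing the points `τ_t`. -/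
theorem tendsto_perturbed_id_comp_sub_div {τ : ℝ → ℝ} {τs D : ℝ} {Ht : ℝ → ℝ → ℝ}
    {H : ℝ → ℝ} {s : Set ℝ}
    (hτ : Tendsto (fun t => (τ t - τs) / t) (𝓝[>] 0) (𝓝 D)) (hτ_mem : ∀ t, τ t ∈ s)
    (hH : ContinuousWithinAt H s τs) (hu : TendstoUniformlyOn Ht H (𝓝[>] 0) s) :
    Tendsto (fun t => (τ t + t * Ht t (τ t) - τs) / t) (𝓝[>] 0) (𝓝 (D + H τs)) := by
  have hτ_lim : Tendsto τ (𝓝[>] 0) (𝓝[s] τs) :=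
    tendsto_nhdsWithin_iff.mpr ⟨tendsto_of_tendsto_sub_div
      (nhdsWithin_mono _ fun _ ht => ne_of_gt ht) hτ, Eventually.of_forall hτ_mem⟩
  refine (hτ.add (hu.tendsto_comp hH hτ_lim)).congr' ?_
  filter_upwards [self_mem_nhdsWithin] with t (ht : 0 < t)
  field_simp
  ring

theorem stmt_9_general (π0 : ℝ) (G1 : ℝ → ℝ) (T : (ℝ → ℝ) → ℝ) (Tdot : (ℝ → ℝ) → ℝ) (τs : ℝ)
    (hτs : τs = T (fun x => π0 * x + (1 - π0) * G1 x))
    (hTrange : ∀ F : ℝ → ℝ, T F ∈ Set.Icc (0:ℝ) 1)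
    (hHad : ∀ H : ℝ → ℝ, ContinuousOn H (Set.Icc 0 1) →
      ∀ Ht : ℝ → ℝ → ℝ, (∀ t ∈ Set.Ioi (0:ℝ), Cadlag (Ht t)) → SupConv Ht H →
      Filter.Tendsto
        (fun t => (T (fun x => (π0 * x + (1 - π0) * G1 x) + t * Ht t x)
          - T (fun x => π0 * x + (1 - π0) * G1 x)) / t)
        (nhdsWithin (0:ℝ) (Set.Ioi 0)) (nhds (Tdot H))) :
    ∀ H0 H1 : ℝ → ℝ, ContinuousOn H0 (Set.Icc 0 1) → ContinuousOn H1 (Set.Icc 0 1) →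
      ∀ H0t H1t : ℝ → ℝ → ℝ,
        (∀ t ∈ Set.Ioi (0:ℝ), Cadlag (H0t t)) → (∀ t ∈ Set.Ioi (0:ℝ), Cadlag (H1t t)) →
        SupConv H0t H0 → SupConv H1t H1 →
        Filter.Tendsto
          (fun t =>
            (π0 * (T (fun x => π0 * (x + t * H0t t x) + (1 - π0) * (G1 x + t * H1t t x))
                + t * H0t t (T (fun x =>
                    π0 * (x + t * H0t t x) + (1 - π0) * (G1 x + t * H1t t x))))
              - π0 * T (fun x => π0 * x + (1 - π0) * G1 x)) / t)
          (nhdsWithin (0:ℝ) (Set.Ioi 0))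
          (nhds (π0 * Tdot (fun x => π0 * H0 x + (1 - π0) * H1 x) + π0 * H0 τs)) := by
  intro H0 H1 hH0 hH1 H0t H1t hc0 hc1 hs0 hs1
  have hmix : ∀ t x, π0 * (x + t * H0t t x) + (1 - π0) * (G1 x + t * H1t t x)
      = (π0 * x + (1 - π0) * G1 x) + t * (π0 * H0t t x + (1 - π0) * H1t t x) := by
    intros; ring
  have hT := hHad (fun x => π0 * H0 x + (1 - π0) * H1 x)
    ((continuousOn_const.mul hH0).add (continuousOn_const.mul hH1))
    (fun t x => π0 * H0t t x + (1 - π0) * H1t t x)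
    (fun t ht => ((hc0 t ht).const_mul π0).add ((hc1 t ht).const_mul (1 - π0)))
    (hs0.linear_combination hs1 π0 (1 - π0))
  simp only [← hmix, ← hτs] at hT
  have hV := (tendsto_perturbed_id_comp_sub_div hT (fun _ => hTrange _)
    (hH0 τs (hτs ▸ hTrange _)) (supConv_iff_tendstoUniformlyOn.mp hs0)).const_mul π0
  rw [← hτs, ← mul_add]
  refine hV.congr fun t => ?_
  rw [mul_div_assoc', mul_sub]

/-- Hadamard differentiability of the proportion-of-false-rejections
map `V(F0,F1) = π0·F0(T(π0·F0 + (1−π0)·F1))` at `(G0,G1)`, `G0 = id`, with derivative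
`(H0,H1) ↦ π0·Ṫ(π0·H0 + (1−π0)·H1) + π0·H0(τ*)`. -/
theorem stmt_9 (π0 : ℝ) (G1 : ℝ → ℝ) (T : (ℝ → ℝ) → ℝ) (Tdot : (ℝ → ℝ) → ℝ) (τs : ℝ)
    (hπ0 : π0 ∈ Set.Icc (0:ℝ) 1)
    (hτs : τs = T (fun x => π0 * x + (1 - π0) * G1 x))
    (hTrange : ∀ F : ℝ → ℝ, T F ∈ Set.Icc (0:ℝ) 1)
    (hHad : ∀ H : ℝ → ℝ, ContinuousOn H (Set.Icc 0 1) →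
      ∀ Ht : ℝ → ℝ → ℝ, (∀ t ∈ Set.Ioi (0:ℝ), Cadlag (Ht t)) → SupConv Ht H →
      Filter.Tendsto
        (fun t => (T (fun x => (π0 * x + (1 - π0) * G1 x) + t * Ht t x)
          - T (fun x => π0 * x + (1 - π0) * G1 x)) / t)
        (nhdsWithin (0:ℝ) (Set.Ioi 0)) (nhds (Tdot H))) :
    ∀ H0 H1 : ℝ → ℝ, ContinuousOn H0 (Set.Icc 0 1) → ContinuousOn H1 (Set.Icc 0 1) →
      ∀ H0t H1t : ℝ → ℝ → ℝ,
        (∀ t ∈ Set.Ioi (0:ℝ), Cadlag (H0t t)) → (∀ t ∈ Set.Ioi (0:ℝ), Cadlag (H1t t)) →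
        SupConv H0t H0 → SupConv H1t H1 →
        Filter.Tendsto
          (fun t =>
            (π0 * (T (fun x => π0 * (x + t * H0t t x) + (1 - π0) * (G1 x + t * H1t t x))
                + t * H0t t (T (fun x =>
                    π0 * (x + t * H0t t x) + (1 - π0) * (G1 x + t * H1t t x))))
              - π0 * T (fun x => π0 * x + (1 - π0) * G1 x)) / t)
          (nhdsWithin (0:ℝ) (Set.Ioi 0))
          (nhds (π0 * Tdot (fun x => π0 * H0 x + (1 - π0) * H1 x) + π0 * H0 τs)) :=
  stmt_9_general π0 G1 T Tdot τs hτs hTrange hHad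
end

section
/- Let α ∈ (0,1], λ ∈ (0,1), and let G : [0,1] → ℝ be continuous and nondecreasing. Suppose u_λ ∈ (0,1) with u_λ < λ satisfies G(u_λ) = u_λ/λ, G(u) > u/λ for all u ∈ (0,u_λ), and G(u) < u/λ for all u ∈ (u_λ,1], and that G is differentiable at u_λ with G'(u_λ) < 1/λ. For F : [0,1] → ℝ define U(F,λ) = sup{u ∈ [0,1] : F(u) ≥ u/λ} (supremum of a nonempty set) and A(F) = α(1−λ)/(1 − U(F,λ)/λ). Then for every continuous H : [0,1] → ℝ and every family (H_t)_{t>0} of cadlag functions with ‖H_t − H‖_∞ → 0 as t → 0⁺, one has (A(G + t·H_t) − A(G))/t → α·φ'(u_λ)·H(u_λ)/(1/λ − G'(u_λ)) as t → 0⁺, where φ(x) = (1−λ)/(1 − x/λ), so that φ'(u_λ) = (1−λ)/(λ(1 − u_λ/λ)²). -/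
/-!
Write `F_t = G + t H_t` and `d = 1/λ - G'(u_λ) > 0`. Near `u_λ`, the gap `F_t(v) - v/λ` equals
`t H(u_λ) - d (v - u_λ)` up to an error `κ (|v - u_λ| + t)` with `κ` as small as we like; away from
`u_λ` it is negative, since `G(v) - v/λ` is bounded away from `0` there by compactness. Hence the
threshold `U(F_t, λ)` lies within `t ε` of `u_λ + t H(u_λ)/d`, i.e. `U` is Hadamard differentiable,
and the chain rule through the smooth map `x ↦ α(1-λ)/(1 - x/λ)` gives the derivative of `A`.
-/

open Filter Set

/-- The BH95 threshold at level `λ`: `U(F,λ) = sup{u ∈ [0,1] : F(u) ≥ u/λ}`. -/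
noncomputable def Ubh (F : ℝ → ℝ) (lam : ℝ) : ℝ :=
  sSup {u ∈ Set.Icc (0:ℝ) 1 | F u ≥ u / lam}

open Topology

theorem le_Ubh {F : ℝ → ℝ} {lam v : ℝ} (hv : v ∈ Icc (0:ℝ) 1) (hFv : v / lam ≤ F v) :
    v ≤ Ubh F lam :=
  le_csSup ⟨1, fun _ hw => hw.1.2⟩ ⟨hv, hFv⟩

theorem Ubh_le {F : ℝ → ℝ} {lam v b : ℝ} (hv : v ∈ Icc (0:ℝ) 1) (hFv : v / lam ≤ F v)
    (hb : ∀ w ∈ Icc (0:ℝ) 1, b < w → F w < w / lam) : Ubh F lam ≤ b :=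
  csSup_le ⟨v, hv, hFv⟩ fun w ⟨hw, hFw⟩ => not_lt.1 fun hbw => (hb w hw hbw).not_ge hFw

theorem Ubh_eq {F : ℝ → ℝ} {lam u : ℝ} (hu : u ∈ Icc (0:ℝ) 1) (hFu : u / lam ≤ F u)
    (habove : ∀ v ∈ Ioc u 1, F v < v / lam) : Ubh F lam = u :=
  le_antisymm (Ubh_le hu hFu fun w hw huw => habove w ⟨huw, hw.2⟩) (le_Ubh hu hFu)

theorem strictAnti_neg_mul_add_mul_abs {d κ : ℝ} (hκ : 0 ≤ κ) (hκd : κ < d) :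
    StrictAnti fun w : ℝ => -(d * w) + κ * |w| := by
  intro a b hab
  have habs : |b| - |a| ≤ b - a :=
    (abs_sub_abs_le_abs_sub b a).trans_eq (abs_of_pos (sub_pos.2 hab))
  nlinarith [mul_le_mul_of_nonneg_left habs hκ]

theorem eventually_nhdsGT_mul_lt (a : ℝ) {b : ℝ} (hb : 0 < b) :
    ∀ᶠ t in 𝓝[>] (0:ℝ), t * a < b := by
  have : Tendsto (fun t : ℝ => t * a) (𝓝[>] 0) (𝓝 0) := by
    simpa using (tendsto_id.mul_const a).mono_left (nhdsWithin_le_nhds (a := (0:ℝ)))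
  exact this.eventually_lt_const hb

theorem tendsto_sub_div_of_eventually_mem_Icc {f : ℝ → ℝ} {u c : ℝ}
    (hf : ∀ ε > 0, ∀ᶠ t in 𝓝[>] (0:ℝ), f t ∈ Icc (u + t * (c - ε)) (u + t * (c + ε))) :
    Tendsto (fun t => (f t - u) / t) (𝓝[>] 0) (𝓝 c) := by
  refine Metric.tendsto_nhds.2 fun ε hε => ?_
  filter_upwards [hf (ε / 2) (half_pos hε), self_mem_nhdsWithin] with t ⟨hlow, hup⟩ (ht : 0 < t)
  have hlow' : c - ε / 2 ≤ (f t - u) / t := by rw [le_div_iff₀ ht]; linarith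
  have hup' : (f t - u) / t ≤ c + ε / 2 := by rw [div_le_iff₀ ht]; linarith
  rw [Real.dist_eq, abs_sub_lt_iff]
  constructor <;> linarith

theorem HasDerivAt.tendsto_sub_div_comp {φ f : ℝ → ℝ} {φ' u c : ℝ} (hφ : HasDerivAt φ φ' u)
    (hf : Tendsto (fun t => (f t - u) / t) (𝓝[>] 0) (𝓝 c)) :
    Tendsto (fun t => (φ (f t) - φ u) / t) (𝓝[>] 0) (𝓝 (φ' * c)) := by
  have hfu : Tendsto f (𝓝[>] 0) (𝓝 u) := by
    have h := tendsto_const_nhds (x := u).add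
      ((tendsto_id.mono_left (nhdsWithin_le_nhds (a := (0:ℝ)))).mul hf)
    rw [zero_mul, add_zero] at h
    refine h.congr' ?_
    filter_upwards [self_mem_nhdsWithin] with t (ht : 0 < t)
    simp [mul_div_cancel₀ _ ht.ne']
  -- the slope of `φ` at `u`, extended continuously by `φ'`, factors every increment of `φ`
  set ψ := Function.update (slope φ u) u φ'
  have hψ : ContinuousAt ψ u := continuousAt_update_same.2 (hasDerivAt_iff_tendsto_slope.1 hφ)
  have hφψ : ∀ y, φ y - φ u = ψ y * (y - u) := by
    intro y
    rcases eq_or_ne y u with rfl | hy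
    · simp
    · rw [show ψ y = slope φ u y from Function.update_of_ne hy _ _, mul_comm, ← smul_eq_mul,
        sub_smul_slope, vsub_eq_sub]
  simp_rw [hφψ, mul_div_assoc]
  rw [← show ψ u = φ' from Function.update_self _ _ _]
  exact (hψ.tendsto.comp hfu).mul hf

theorem hasDerivAt_const_div_one_sub_div {a lam u : ℝ} (hlam : lam ≠ 0) (hu : u ≠ lam) :
    HasDerivAt (fun x => a / (1 - x / lam)) (a / (lam * (1 - u / lam) ^ 2)) u := by
  have hne : 1 - u / lam ≠ 0 := sub_ne_zero.2 fun h => hu ((div_eq_one_iff_eq hlam).1 h.symm)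
  refine ((hasDerivAt_const u a).fun_div ((hasDerivAt_id' u).div_const lam |>.const_sub 1)
    hne).congr_deriv ?_
  field_simp
  ring

-- `κ` is the error rate of the local expansion of the gap: an error `κ (|w| + t)` at
-- `|w| ≤ t (|c| + ε)` is then at most the margin `d t ε`
theorem exists_pos_lt_mul_add_one_eq (c : ℝ) {d ε : ℝ} (hd : 0 < d) (hε : 0 < ε) :
    ∃ κ, 0 < κ ∧ κ < d ∧ κ * (|c| + ε + 1) = d * ε := by
  have hcε : 0 < |c| + ε + 1 := by positivity
  refine ⟨d * ε / (|c| + ε + 1), by positivity, ?_, div_mul_cancel₀ _ hcε.ne'⟩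
  rw [div_lt_iff₀ hcε]
  nlinarith [abs_nonneg c]

section Threshold

variable {G H : ℝ → ℝ} {h : ℝ → ℝ → ℝ} {lam u g' c ε : ℝ}

theorem eventually_abs_gap_sub_le (hGd : HasDerivAt G g' u) (hcross : G u = u / lam)
    (hH : ContinuousAt H u) (hh : SupConv h H) {κ : ℝ} (hκ : 0 < κ) :
    ∃ δ > 0, ∀ᶠ t in 𝓝[>] (0:ℝ), ∀ v ∈ Icc (0:ℝ) 1, |v - u| < δ →
      |G v + t * h t v - v / lam - (t * H u - (1 / lam - g') * (v - u))| ≤ κ * (|v - u| + t) := by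
  obtain ⟨δ₁, hδ₁, hG⟩ := Metric.eventually_nhds_iff.1 ((hasDerivAt_iff_isLittleO.1 hGd).def hκ)
  obtain ⟨δ₂, hδ₂, hHu⟩ := Metric.continuousAt_iff.1 hH (κ / 2) (half_pos hκ)
  refine ⟨min δ₁ δ₂, lt_min hδ₁ hδ₂, ?_⟩
  filter_upwards [hh (κ / 2) (half_pos hκ), self_mem_nhdsWithin] with t hht (ht : 0 < t) v hv hvu
  have hdist : dist v u < min δ₁ δ₂ := by rwa [Real.dist_eq]
  have hGv : |G v - G u - (v - u) * g'| ≤ κ * |v - u| := by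
    simpa using hG (hdist.trans_le (min_le_left _ _))
  have hHv : |H v - H u| ≤ κ / 2 := by
    simpa [Real.dist_eq] using (hHu (hdist.trans_le (min_le_right _ _))).le
  calc |G v + t * h t v - v / lam - (t * H u - (1 / lam - g') * (v - u))|
      = |(G v - G u - (v - u) * g') + t * ((h t v - H v) + (H v - H u))| := by
        rw [hcross]; ring_nf
    _ ≤ |G v - G u - (v - u) * g'| + t * (|h t v - H v| + |H v - H u|) := by
        grw [abs_add_le, abs_mul, abs_of_pos ht, abs_add_le]
    _ ≤ κ * |v - u| + t * (κ / 2 + κ / 2) := by grw [hGv, hht v hv, hHv]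
    _ = κ * (|v - u| + t) := by ring

theorem eventually_gap_neg_of_add_le (hu : 0 ≤ u) (hGc : ContinuousOn G (Icc 0 1))
    (habove : ∀ v ∈ Ioc u 1, G v < v / lam) (hHc : ContinuousOn H (Icc 0 1)) (hh : SupConv h H)
    {δ : ℝ} (hδ : 0 < δ) :
    ∀ᶠ t in 𝓝[>] (0:ℝ), ∀ v ∈ Icc (0:ℝ) 1, u + δ ≤ v → G v + t * h t v < v / lam := by
  have hsub : Icc (u + δ) 1 ⊆ Icc 0 1 := Icc_subset_Icc (by linarith) le_rfl
  obtain ⟨η, hη, hgap⟩ := isCompact_Icc.exists_forall_le' (a := 0)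
    ((continuousOn_id.div_const lam).sub (hGc.mono hsub))
    fun v hv => sub_pos.2 (habove v ⟨by linarith [hv.1], hv.2⟩)
  obtain ⟨M, hM⟩ := isCompact_Icc.exists_bound_of_continuousOn hHc
  filter_upwards [hh 1 one_pos, eventually_nhdsGT_mul_lt (M + 1) hη, self_mem_nhdsWithin]
    with t hht htM (ht : 0 < t) v hv hδv
  have hhv : h t v ≤ M + 1 := by
    linarith [(abs_le.1 (hht v hv)).2, (abs_le.1 (hM v hv)).2]
  have := hgap v ⟨hδv, hv.2⟩
  simp only [Pi.sub_apply, id_eq] at this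
  nlinarith [mul_le_mul_of_nonneg_left hhv ht.le]

theorem eventually_gap_nonneg_at_lower (hu : u ∈ Ioo (0:ℝ) 1) (hcross : G u = u / lam)
    (hGd : HasDerivAt G g' u) (hslope : g' < 1 / lam) (hHc : ContinuousOn H (Icc 0 1))
    (hh : SupConv h H) (hc : H u = (1 / lam - g') * c) (hε : 0 < ε) :
    ∀ᶠ t in 𝓝[>] (0:ℝ), u + t * (c - ε) ∈ Icc (0:ℝ) 1 ∧
      (u + t * (c - ε)) / lam ≤ G (u + t * (c - ε)) + t * h t (u + t * (c - ε)) := by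
  obtain ⟨κ, hκ, -, hκε⟩ := exists_pos_lt_mul_add_one_eq c (sub_pos.2 hslope) hε
  obtain ⟨δ, hδ, hnear⟩ := eventually_abs_gap_sub_le hGd hcross
    (hHc.continuousAt (Icc_mem_nhds hu.1 hu.2)) hh hκ
  have hlim : Tendsto (fun t : ℝ => u + t * (c - ε)) (𝓝[>] 0) (𝓝 u) := by
    simpa using (tendsto_const_nhds.add (tendsto_id.mul_const (c - ε))).mono_left
      (nhdsWithin_le_nhds (a := (0:ℝ)))
  filter_upwards [hnear, hlim.eventually (Icc_mem_nhds hu.1 hu.2),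
    eventually_nhdsGT_mul_lt (|c| + ε) hδ, self_mem_nhdsWithin] with t hnear hmem htδ (ht : 0 < t)
  refine ⟨hmem, ?_⟩
  have habs : |u + t * (c - ε) - u| = t * |c - ε| := by
    rw [add_sub_cancel_left, abs_mul, abs_of_pos ht]
  have hcε : |c - ε| ≤ |c| + ε := by simpa [abs_of_pos hε] using abs_sub c ε
  have := (abs_le.1 (hnear _ hmem (by nlinarith))).1
  rw [habs, hc] at this
  nlinarith [mul_le_mul_of_nonneg_left hcε (mul_nonneg ht.le hκ.le)]

theorem eventually_gap_neg_above_upper (hu : u ∈ Ioo (0:ℝ) 1) (hcross : G u = u / lam)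
    (hGd : HasDerivAt G g' u) (hslope : g' < 1 / lam) (hHc : ContinuousOn H (Icc 0 1))
    (hh : SupConv h H) (hc : H u = (1 / lam - g') * c) (hGc : ContinuousOn G (Icc 0 1))
    (habove : ∀ v ∈ Ioc u 1, G v < v / lam) (hε : 0 < ε) :
    ∀ᶠ t in 𝓝[>] (0:ℝ), ∀ v ∈ Icc (0:ℝ) 1, u + t * (c + ε) < v → G v + t * h t v < v / lam := by
  obtain ⟨κ, hκ, hκd, hκε⟩ := exists_pos_lt_mul_add_one_eq c (sub_pos.2 hslope) hε
  obtain ⟨δ, hδ, hnear⟩ := eventually_abs_gap_sub_le hGd hcross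
    (hHc.continuousAt (Icc_mem_nhds hu.1 hu.2)) hh hκ
  filter_upwards [hnear, eventually_gap_neg_of_add_le hu.1.le hGc habove hHc hh hδ,
    eventually_nhdsGT_mul_lt (|c| + ε) hδ, self_mem_nhdsWithin]
    with t hnear hfar htδ (ht : 0 < t) v hv hvgt
  rcases le_or_gt (u + δ) v with hδv | hvδ
  · exact hfar v hv hδv
  have hcε : |c + ε| ≤ |c| + ε := by simpa [abs_of_pos hε] using abs_add_le c ε
  have hvu : |v - u| < δ := by
    rw [abs_lt]
    constructor <;> nlinarith [neg_abs_le (c + ε), mul_le_mul_of_nonneg_left hcε ht.le]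
  have hdec := strictAnti_neg_mul_add_mul_abs hκ.le hκd (show t * (c + ε) < v - u by linarith)
  simp only [abs_mul, abs_of_pos ht] at hdec
  have := (abs_le.1 (hnear v hv hvu)).2
  rw [hc] at this
  nlinarith [mul_le_mul_of_nonneg_left hcε (mul_nonneg ht.le hκ.le)]

theorem eventually_Ubh_mem_Icc (hu : u ∈ Ioo (0:ℝ) 1) (hcross : G u = u / lam)
    (hGd : HasDerivAt G g' u) (hslope : g' < 1 / lam) (hHc : ContinuousOn H (Icc 0 1))
    (hh : SupConv h H) (hc : H u = (1 / lam - g') * c) (hGc : ContinuousOn G (Icc 0 1))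
    (habove : ∀ v ∈ Ioc u 1, G v < v / lam) (hε : 0 < ε) :
    ∀ᶠ t in 𝓝[>] (0:ℝ),
      Ubh (fun v => G v + t * h t v) lam ∈ Icc (u + t * (c - ε)) (u + t * (c + ε)) := by
  filter_upwards [eventually_gap_nonneg_at_lower hu hcross hGd hslope hHc hh hc hε,
    eventually_gap_neg_above_upper hu hcross hGd hslope hHc hh hc hGc habove hε]
    with t ⟨hmem, hlow⟩ hup
  exact ⟨le_Ubh hmem hlow, Ubh_le hmem hlow hup⟩

end Threshold

theorem stmt_11_general (α lam ulam g' : ℝ) (G : ℝ → ℝ)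
    (hlam : lam ∈ Set.Ioo (0:ℝ) 1)
    (hGc : ContinuousOn G (Set.Icc 0 1))
    (hulam : ulam ∈ Set.Ioo (0:ℝ) 1) (hulamlt : ulam < lam)
    (hcross : G ulam = ulam / lam)
    (habove : ∀ u ∈ Set.Ioc ulam 1, G u < u / lam)
    (hG' : HasDerivWithinAt G g' (Set.Icc 0 1) ulam)
    (hslope : g' < 1 / lam) :
    ∀ H : ℝ → ℝ, ContinuousOn H (Set.Icc 0 1) →
      ∀ Ht : ℝ → ℝ → ℝ, (∀ t ∈ Set.Ioi (0:ℝ), Cadlag (Ht t)) → SupConv Ht H →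
      Filter.Tendsto
        (fun t => (α * (1 - lam) / (1 - Ubh (fun x => G x + t * Ht t x) lam / lam)
            - α * (1 - lam) / (1 - Ubh G lam / lam)) / t)
        (nhdsWithin (0:ℝ) (Set.Ioi 0))
        (nhds (α * ((1 - lam) / (lam * (1 - ulam / lam) ^ 2)) * H ulam
          / (1 / lam - g'))) := by
  intro H hHc Ht _ hsup
  have hUG : Ubh G lam = ulam := Ubh_eq (Ioo_subset_Icc_self hulam) hcross.ge habove
  have hGd : HasDerivAt G g' ulam := hG'.hasDerivAt (Icc_mem_nhds hulam.1 hulam.2)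
  have hc : H ulam = (1 / lam - g') * (H ulam / (1 / lam - g')) :=
    (mul_div_cancel₀ _ (sub_pos.2 hslope).ne').symm
  have hU := tendsto_sub_div_of_eventually_mem_Icc fun ε hε =>
    eventually_Ubh_mem_Icc hulam hcross hGd hslope hHc hsup hc hGc habove hε
  have hA := (hasDerivAt_const_div_one_sub_div (a := α * (1 - lam)) hlam.1.ne'
    hulamlt.ne).tendsto_sub_div_comp hU
  rw [hUG]
  convert hA using 2
  ring

/-- Hadamard differentiability at `G` of the BKY06(λ) level function
`A(F) = α(1−λ)/(1 − U(F,λ)/λ)`, with derivative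
`H ↦ α·φ'(u_λ)·H(u_λ)/(1/λ − G'(u_λ))`, where `φ'(u_λ) = (1−λ)/(λ(1 − u_λ/λ)²)`. -/
theorem stmt_11 (α lam ulam g' : ℝ) (G : ℝ → ℝ)
    (hα : α ∈ Set.Ioc (0:ℝ) 1) (hlam : lam ∈ Set.Ioo (0:ℝ) 1)
    (hGc : ContinuousOn G (Set.Icc 0 1))
    (hGmono : MonotoneOn G (Set.Icc 0 1))
    (hulam : ulam ∈ Set.Ioo (0:ℝ) 1) (hulamlt : ulam < lam)
    (hcross : G ulam = ulam / lam)
    (hbelow : ∀ u ∈ Set.Ioo (0:ℝ) ulam, G u > u / lam)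
    (habove : ∀ u ∈ Set.Ioc ulam 1, G u < u / lam)
    (hG' : HasDerivWithinAt G g' (Set.Icc 0 1) ulam)
    (hslope : g' < 1 / lam) :
    ∀ H : ℝ → ℝ, ContinuousOn H (Set.Icc 0 1) →
      ∀ Ht : ℝ → ℝ → ℝ, (∀ t ∈ Set.Ioi (0:ℝ), Cadlag (Ht t)) → SupConv Ht H →
      Filter.Tendsto
        (fun t => (α * (1 - lam) / (1 - Ubh (fun x => G x + t * Ht t x) lam / lam)
            - α * (1 - lam) / (1 - Ubh G lam / lam)) / t)
        (nhdsWithin (0:ℝ) (Set.Ioi 0))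
        (nhds (α * ((1 - lam) / (lam * (1 - ulam / lam) ^ 2)) * H ulam
          / (1 / lam - g'))) :=
  stmt_11_general α lam ulam g' G hlam hGc hulam hulamlt hcross habove hG' hslope
end

section
/- Let λ ∈ (0,1). Let G : [0,1] → ℝ be continuous with u ↦ G(u)/u nonincreasing on (0,1), and let c : (0,λ] → ℝ be continuous with u ↦ c(u)/u nonincreasing on (0,λ]. Suppose τ* ∈ (0,λ] is the unique point of (0,λ] with G(τ*) = c(τ*), and that for all u ∈ (0,λ], G(u) ≥ c(u) if and only if u ≤ τ*. Suppose also that for every t ∈ (0,λ] there is τ(t) ∈ (0,1), the unique point of (0,1) with G(τ(t))/τ(t) = c(t)/t, such that for all u ∈ (0,1), G(u)/u ≥ c(t)/t if and only if u ≤ τ(t). Then: (i) for every t ∈ (0,λ], if t ≤ τ* then t ≤ τ(t) ≤ τ*, and if t ≥ τ* then τ* ≤ τ(t) ≤ t; (ii) for every t ∈ (0,λ], the sequence defined by t_0 = t and t_{n+1} = τ(t_n) is well defined (all t_n lie in (0,λ]) and converges to τ*. -/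
open Filter Set

/-- fixed-point interpretation of one-stage adaptive procedures.
`τ*` is the unique right crossing point of `G` and `c` on `(0,λ]`, and `τ(t)` the
threshold of the plug-in procedure with Simes-type rejection curve of slope
`c(t)/t`. Then (i) `τ(t)` lies between `t` and `τ*`, and (ii) the iteration
`t_{n+1} = τ(t_n)` stays in `(0,λ]` and converges to `τ*`. -/
theorem stmt_12 (lam : ℝ) (G c : ℝ → ℝ) (τs : ℝ) (τ : ℝ → ℝ)
    (hlam : lam ∈ Set.Ioo (0:ℝ) 1)
    (hGc : ContinuousOn G (Set.Icc 0 1))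
    (hGratio : AntitoneOn (fun u => G u / u) (Set.Ioo (0:ℝ) 1))
    (hcc : ContinuousOn c (Set.Ioc 0 lam))
    (hcratio : AntitoneOn (fun u => c u / u) (Set.Ioc (0:ℝ) lam))
    (hτs : τs ∈ Set.Ioc (0:ℝ) lam)
    (hcross : G τs = c τs)
    (huniq : ∀ u ∈ Set.Ioc (0:ℝ) lam, G u = c u → u = τs)
    (hiff : ∀ u ∈ Set.Ioc (0:ℝ) lam, (G u ≥ c u ↔ u ≤ τs))
    (hτ : ∀ t ∈ Set.Ioc (0:ℝ) lam,
      τ t ∈ Set.Ioo (0:ℝ) 1 ∧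
      G (τ t) / τ t = c t / t ∧
      (∀ u ∈ Set.Ioo (0:ℝ) 1, G u / u = c t / t → u = τ t) ∧
      (∀ u ∈ Set.Ioo (0:ℝ) 1, (G u / u ≥ c t / t ↔ u ≤ τ t))) :
    (∀ t ∈ Set.Ioc (0:ℝ) lam,
      (t ≤ τs → t ≤ τ t ∧ τ t ≤ τs) ∧ (τs ≤ t → τs ≤ τ t ∧ τ t ≤ t)) ∧
    (∀ t ∈ Set.Ioc (0:ℝ) lam, ∀ s : ℕ → ℝ,
      s 0 = t → (∀ n, s (n + 1) = τ (s n)) →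
      (∀ n, s n ∈ Set.Ioc (0:ℝ) lam) ∧
      Filter.Tendsto s Filter.atTop (nhds τs)) := by
  obtain ⟨hlam0, hlam1⟩ := hlam
  have hτs0 : (0:ℝ) < τs := hτs.1
  have hτs1 : τs < 1 := lt_of_le_of_lt hτs.2 hlam1
  have key : ∀ t ∈ Set.Ioc (0:ℝ) lam,
      (t ≤ τs → t ≤ τ t ∧ τ t ≤ τs) ∧ (τs ≤ t → τs ≤ τ t ∧ τ t ≤ t) := by
    intro t ht
    obtain ⟨hm, heq, hu, hif⟩ := hτ t ht
    have ht1 : t < 1 := lt_of_le_of_lt ht.2 hlam1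
    constructor
    · intro htτ
      have h1 : t ≤ τ t := by
        have hGt : c t ≤ G t := (hiff t ht).mpr htτ
        exact (hif t ⟨ht.1, ht1⟩).mp ((div_le_div_iff_of_pos_right ht.1).mpr hGt)
      refine ⟨h1, ?_⟩
      by_contra hcon
      push_neg at hcon
      have h2 : c t / t ≤ G τs / τs := (hif τs ⟨hτs0, hτs1⟩).mpr hcon.le
      have h3 : c τs / τs ≤ c t / t := hcratio ht hτs htτ
      have h4 : G τs / τs = c t / t :=
        le_antisymm (by rw [hcross]; exact h3) h2
      exact absurd (hu τs ⟨hτs0, hτs1⟩ h4) (ne_of_lt hcon)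
    · intro hτt
      have h1 : τs ≤ τ t := by
        have h3 : c t / t ≤ c τs / τs := hcratio hτs ht hτt
        exact (hif τs ⟨hτs0, hτs1⟩).mp (by rw [hcross]; exact h3)
      refine ⟨h1, ?_⟩
      by_contra hcon
      push_neg at hcon
      have hGt : c t / t ≤ G t / t := (hif t ⟨ht.1, ht1⟩).mpr hcon.le
      have hGt' : c t ≤ G t := (div_le_div_iff_of_pos_right ht.1).mp hGt
      have hteq : t = τs := le_antisymm ((hiff t ht).mp hGt') hτt
      have h4 : G t / t = c t / t := by rw [hteq, hcross]
      exact absurd (hu t ⟨ht.1, ht1⟩ h4) (ne_of_lt hcon)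
  refine ⟨key, ?_⟩
  intro t ht s hs0 hsrec
  have hmem : ∀ n, s n ∈ Set.Ioc (0:ℝ) lam := by
    intro n
    induction n with
    | zero => rw [hs0]; exact ht
    | succ n ih =>
      rw [hsrec]
      rcases le_total (s n) τs with h | h
      · obtain ⟨ha, hb⟩ := (key (s n) ih).1 h
        exact ⟨lt_of_lt_of_le ih.1 ha, le_trans hb hτs.2⟩
      · obtain ⟨ha, hb⟩ := (key (s n) ih).2 h
        exact ⟨lt_of_lt_of_le hτs0 ha, le_trans hb ih.2⟩
  refine ⟨hmem, ?_⟩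
  have limit_id : ∀ L ∈ Set.Ioc (0:ℝ) lam, Tendsto s atTop (nhds L) → L = τs := by
    intro L hL hsL
    have hL1 : L < 1 := lt_of_le_of_lt hL.2 hlam1
    have hsub : Tendsto s atTop (nhdsWithin L (Set.Ioc 0 lam)) :=
      tendsto_nhdsWithin_of_tendsto_nhds_of_eventually_within s hsL
        (Filter.Eventually.of_forall hmem)
    have hclim : Tendsto (fun n => c (s n) / s n) atTop (nhds (c L / L)) :=
      ((hcc L hL).tendsto.comp hsub).div hsL (ne_of_gt hL.1)
    have hs1 : Tendsto (fun n => s (n + 1)) atTop (nhds L) :=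
      hsL.comp (tendsto_add_atTop_nat 1)
    have hsub1 : Tendsto (fun n => s (n + 1)) atTop (nhdsWithin L (Set.Icc 0 1)) :=
      tendsto_nhdsWithin_of_tendsto_nhds_of_eventually_within _ hs1
        (Filter.Eventually.of_forall fun n =>
          ⟨(hmem (n + 1)).1.le, (hmem (n + 1)).2.trans hlam1.le⟩)
    have hGlim : Tendsto (fun n => G (s (n + 1)) / s (n + 1)) atTop (nhds (G L / L)) :=
      ((hGc L ⟨hL.1.le, hL1.le⟩).tendsto.comp hsub1).div hs1 (ne_of_gt hL.1)
    have heqn : ∀ n, c (s n) / s n = G (s (n + 1)) / s (n + 1) := by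
      intro n
      rw [hsrec n]
      exact ((hτ (s n) (hmem n)).2.1).symm
    have hdiv : c L / L = G L / L :=
      tendsto_nhds_unique (Filter.Tendsto.congr heqn hclim) hGlim
    have hGL : G L = c L := by
      field_simp [ne_of_gt hL.1] at hdiv
      linarith
    exact huniq L hL hGL
  rcases le_total t τs with hcase | hcase
  · have hside : ∀ n, s n ≤ τs := by
      intro n
      induction n with
      | zero => rw [hs0]; exact hcase
      | succ n ih => rw [hsrec]; exact ((key (s n) (hmem n)).1 ih).2
    have hmono : Monotone s := by
      apply monotone_nat_of_le_succ
      intro n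
      rw [hsrec]
      exact ((key (s n) (hmem n)).1 (hside n)).1
    have hbdd : BddAbove (Set.range s) := ⟨τs, by rintro x ⟨n, rfl⟩; exact hside n⟩
    have hlim : Tendsto s atTop (nhds (⨆ n, s n)) := tendsto_atTop_ciSup hmono hbdd
    have hLge : t ≤ ⨆ n, s n := hs0 ▸ le_ciSup hbdd 0
    have hLmem : (⨆ n, s n) ∈ Set.Ioc (0:ℝ) lam :=
      ⟨lt_of_lt_of_le ht.1 hLge, (ciSup_le hside).trans hτs.2⟩
    have := limit_id _ hLmem hlim
    exact this ▸ hlim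
  · have hside : ∀ n, τs ≤ s n := by
      intro n
      induction n with
      | zero => rw [hs0]; exact hcase
      | succ n ih => rw [hsrec]; exact ((key (s n) (hmem n)).2 ih).1
    have hanti : Antitone s := by
      apply antitone_nat_of_succ_le
      intro n
      rw [hsrec]
      exact ((key (s n) (hmem n)).2 (hside n)).2
    have hbdd : BddBelow (Set.range s) := ⟨τs, by rintro x ⟨n, rfl⟩; exact hside n⟩
    have hlim : Tendsto s atTop (nhds (⨅ n, s n)) := tendsto_atTop_ciInf hanti hbdd
    have hLle : (⨅ n, s n) ≤ t := hs0 ▸ ciInf_le hbdd 0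
    have hLmem : (⨅ n, s n) ∈ Set.Ioc (0:ℝ) lam :=
      ⟨lt_of_lt_of_le hτs0 (le_ciInf hside), hLle.trans ht.2⟩
    have := limit_id _ hLmem hlim
    exact this ▸ hlim
end

section
/- Let α ∈ (0,1) and let G : [0,1] → ℝ be continuous and nondecreasing with G(0) = 0, such that u ↦ G(u)/u is nonincreasing on (0,1) and u ↦ (1−G(u))/(1−u) is nonincreasing on (0,1). Suppose τ* ∈ (0,1) is the unique point of (0,1) with G(τ*) = (τ*/α)·(1−G(τ*))/(1−τ*), and that for all u ∈ (0,1), G(u) ≥ (u/α)·(1−G(u))/(1−u) if and only if u ≤ τ*. Suppose also that for every t ∈ (0,1) there is τ(t) ∈ (0,1), the unique point of (0,1) with G(τ(t))/τ(t) = (1−G(t))/(α(1−t)), such that for all u ∈ (0,1), G(u)/u ≥ (1−G(t))/(α(1−t)) if and only if u ≤ τ(t). Then for every t_0 ∈ (0,1), the sequence defined by t_{n+1} = τ(t_n) converges to τ*. -/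
open Filter Set

/-- connection between Storey's procedures Sto02(t) (thresholds `τ(t)`)
and the FDR08 procedure (threshold `τ*`): for any starting point `t₀ ∈ (0,1)`, the
iteration `t_{n+1} = τ(t_n)` converges to `τ*`. -/
theorem stmt_14 (α : ℝ) (G : ℝ → ℝ) (τs : ℝ) (τ : ℝ → ℝ)
    (hα : α ∈ Set.Ioo (0:ℝ) 1)
    (hGc : ContinuousOn G (Set.Icc 0 1))
    (hGmono : MonotoneOn G (Set.Icc 0 1))
    (hG0 : G 0 = 0)
    (hGratio : AntitoneOn (fun u => G u / u) (Set.Ioo (0:ℝ) 1))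
    (hGratio' : AntitoneOn (fun u => (1 - G u) / (1 - u)) (Set.Ioo (0:ℝ) 1))
    (hτs : τs ∈ Set.Ioo (0:ℝ) 1)
    (hcross : G τs = (τs / α) * ((1 - G τs) / (1 - τs)))
    (huniq : ∀ u ∈ Set.Ioo (0:ℝ) 1, G u = (u / α) * ((1 - G u) / (1 - u)) → u = τs)
    (hiff : ∀ u ∈ Set.Ioo (0:ℝ) 1, (G u ≥ (u / α) * ((1 - G u) / (1 - u)) ↔ u ≤ τs))
    (hτ : ∀ t ∈ Set.Ioo (0:ℝ) 1,
      τ t ∈ Set.Ioo (0:ℝ) 1 ∧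
      G (τ t) / τ t = (1 - G t) / (α * (1 - t)) ∧
      (∀ u ∈ Set.Ioo (0:ℝ) 1, G u / u = (1 - G t) / (α * (1 - t)) → u = τ t) ∧
      (∀ u ∈ Set.Ioo (0:ℝ) 1, (G u / u ≥ (1 - G t) / (α * (1 - t)) ↔ u ≤ τ t))) :
    ∀ t₀ ∈ Set.Ioo (0:ℝ) 1, ∀ s : ℕ → ℝ,
      s 0 = t₀ → (∀ n, s (n + 1) = τ (s n)) →
      Filter.Tendsto s Filter.atTop (nhds τs) := by
  obtain ⟨hα0, hα1⟩ := hα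
  obtain ⟨hτs0, hτs1⟩ := hτs
  have hkey : ∀ (u X : ℝ), 0 < u → ((u/α) * X ≤ G u ↔ X/α ≤ G u / u) := by
    intro u X hu
    rw [le_div_iff₀ hu, show X/α*u = u/α*X from by ring]
  have hc : ∀ x : ℝ, ((1 - G x)/(1 - x))/α = (1 - G x)/(α*(1 - x)) := by
    intro x; rw [div_div, mul_comm]
  have hcm : ∀ a ∈ Set.Ioo (0:ℝ) 1, ∀ b ∈ Set.Ioo (0:ℝ) 1, a ≤ b →
      (1 - G b)/(α*(1 - b)) ≤ (1 - G a)/(α*(1 - a)) := by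
    intro a ha b hb hab
    rw [← hc, ← hc]
    exact div_le_div_of_nonneg_right (hGratio' ha hb hab) hα0.le
  have heqs : G τs / τs = (1 - G τs)/(α*(1 - τs)) := by
    have h1 : (1:ℝ) - τs ≠ 0 := ne_of_gt (sub_pos.mpr hτs1)
    have h2 : τs ≠ 0 := ne_of_gt hτs0
    have h3 : α ≠ 0 := ne_of_gt hα0
    have h := hcross
    field_simp at h ⊢
    nlinarith [h]
  have hτfix : τ τs = τs :=
    ((hτ τs ⟨hτs0, hτs1⟩).2.2.1 τs ⟨hτs0, hτs1⟩ heqs).symm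
  have hA : ∀ t ∈ Set.Ioo (0:ℝ) 1, t ≤ τs → t ≤ τ t ∧ τ t ≤ τs := by
    intro t ht hle
    obtain ⟨hτt, heq, -, hif⟩ := hτ t ht
    have h1 : (t/α) * ((1 - G t)/(1 - t)) ≤ G t := (hiff t ht).mpr hle
    have h2 : (1 - G t)/(α*(1 - t)) ≤ G t / t := by
      rw [← hc]; exact (hkey t _ ht.1).mp h1
    have h3 : t ≤ τ t := (hif t ht).mp h2
    refine ⟨h3, ?_⟩
    apply (hiff (τ t) hτt).mp
    have h4 : (1 - G (τ t))/(α*(1 - τ t)) ≤ G (τ t) / (τ t) := by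
      rw [heq]; exact hcm t ht (τ t) hτt h3
    exact (hkey (τ t) _ hτt.1).mpr (by rw [hc]; exact h4)
  have hB : ∀ t ∈ Set.Ioo (0:ℝ) 1, τs ≤ t → τs ≤ τ t ∧ τ t ≤ t := by
    intro t ht hle
    obtain ⟨hτt, heq, -, hif⟩ := hτ t ht
    constructor
    · apply (hif τs ⟨hτs0, hτs1⟩).mp
      rw [ge_iff_le, heqs]
      exact hcm τs ⟨hτs0, hτs1⟩ t ht hle
    · rcases eq_or_lt_of_le hle with rfl | hlt
      · rw [hτfix]
      · by_contra hcon
        push_neg at hcon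
        have h2 := (hif t ht).mpr hcon.le
        have h1 := (hiff t ht).mp ((hkey t _ ht.1).mpr (by rw [hc]; exact h2))
        exact absurd h1 (not_le.mpr hlt)
  intro t₀ ht₀ s hs0 hsrec
  have hlim : ∀ L : ℝ, L ∈ Set.Ioo (0:ℝ) 1 → (∀ n, s n ∈ Set.Ioo (0:ℝ) 1) →
      Tendsto s atTop (nhds L) → L = τs := by
    intro L hL hmem hten
    have hGcont : ContinuousAt G L :=
      hGc.continuousAt (Icc_mem_nhds hL.1 hL.2)
    have hGs : Tendsto (fun n => G (s n)) atTop (nhds (G L)) := hGcont.tendsto.comp hten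
    have hshift : Tendsto (fun n => s (n+1)) atTop (nhds L) :=
      hten.comp (tendsto_add_atTop_nat 1)
    have hGs' : Tendsto (fun n => G (s (n+1))) atTop (nhds (G L)) :=
      hGcont.tendsto.comp hshift
    have h1 : Tendsto (fun n => G (s (n+1)) / s (n+1)) atTop (nhds (G L / L)) :=
      hGs'.div hshift (ne_of_gt hL.1)
    have hden : α * (1 - L) ≠ 0 := ne_of_gt (mul_pos hα0 (sub_pos.mpr hL.2))
    have h2 : Tendsto (fun n => (1 - G (s n)) / (α * (1 - s n))) atTop
        (nhds ((1 - G L) / (α * (1 - L)))) :=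
      (tendsto_const_nhds.sub hGs).div
        (Tendsto.const_mul α (tendsto_const_nhds.sub hten)) hden
    have hfeq : (fun n => G (s (n+1)) / s (n+1))
        = (fun n => (1 - G (s n)) / (α * (1 - s n))) := by
      funext n
      rw [hsrec n]
      exact (hτ (s n) (hmem n)).2.1
    rw [hfeq] at h1
    have hE : G L / L = (1 - G L) / (α * (1 - L)) := tendsto_nhds_unique h1 h2
    apply huniq L hL
    have hLne : L ≠ 0 := ne_of_gt hL.1
    have h1L : (1:ℝ) - L ≠ 0 := ne_of_gt (sub_pos.mpr hL.2)
    have hαne : α ≠ 0 := ne_of_gt hα0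
    field_simp at hE ⊢
    nlinarith [hE]
  rcases le_or_gt t₀ τs with hle | hlt
  · have hmem : ∀ n, s n ∈ Set.Ioo (0:ℝ) 1 ∧ s n ≤ τs := by
      intro n; induction n with
      | zero => exact hs0 ▸ ⟨ht₀, hle⟩
      | succ n ih =>
        rw [hsrec n]
        exact ⟨(hτ (s n) ih.1).1, (hA (s n) ih.1 ih.2).2⟩
    have hmono : Monotone s := monotone_nat_of_le_succ (fun n => by
      rw [hsrec n]; exact (hA (s n) (hmem n).1 (hmem n).2).1)
    have hbdd : BddAbove (Set.range s) := ⟨τs, by rintro x ⟨n, rfl⟩; exact (hmem n).2⟩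
    have hten := tendsto_atTop_ciSup hmono hbdd
    have hLmem : (⨆ n, s n) ∈ Set.Ioo (0:ℝ) 1 :=
      ⟨lt_of_lt_of_le (hmem 0).1.1 (le_ciSup hbdd 0),
       lt_of_le_of_lt (ciSup_le fun n => (hmem n).2) hτs1⟩
    have hfin := hlim _ hLmem (fun n => (hmem n).1) hten
    rwa [hfin] at hten
  · have hmem : ∀ n, s n ∈ Set.Ioo (0:ℝ) 1 ∧ τs ≤ s n := by
      intro n; induction n with
      | zero => exact hs0 ▸ ⟨ht₀, hlt.le⟩
      | succ n ih =>
        rw [hsrec n]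
        exact ⟨(hτ (s n) ih.1).1, (hB (s n) ih.1 ih.2).1⟩
    have hanti : Antitone s := antitone_nat_of_succ_le (fun n => by
      rw [hsrec n]; exact (hB (s n) (hmem n).1 (hmem n).2).2)
    have hbdd : BddBelow (Set.range s) := ⟨τs, by rintro x ⟨n, rfl⟩; exact (hmem n).2⟩
    have hten := tendsto_atTop_ciInf hanti hbdd
    have hLmem : (⨅ n, s n) ∈ Set.Ioo (0:ℝ) 1 :=
      ⟨lt_of_lt_of_le hτs0 (le_ciInf fun n => (hmem n).2),
       lt_of_le_of_lt (ciInf_le hbdd 0) (hmem 0).1.2⟩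
    have hfin := hlim _ hLmem (fun n => (hmem n).1) hten
    rwa [hfin] at hten
end

section
/- Let α ∈ (0,1), λ ∈ (0,1), and let G : [0,1] → ℝ be continuous and nondecreasing with G(0) = 0 and u ↦ G(u)/u nonincreasing on (0,1). Suppose τ* ∈ (0,λ] is the unique point of (0,λ] with G(τ*) = τ*·(1−G(τ*))/(α(1−λ)), and that for all u ∈ (0,λ], G(u) ≥ u·(1−G(u))/(α(1−λ)) if and only if u ≤ τ*. Suppose that for every t ∈ (0,λ] there is τ(t) ∈ (0,1), the unique point of (0,1) with G(τ(t))/τ(t) = (1−G(t))/(α(1−λ)), such that for all u ∈ (0,1), G(u)/u ≥ (1−G(t))/(α(1−λ)) if and only if u ≤ τ(t). Finally, suppose u_λ ∈ (0,λ] satisfies G(u_λ) = u_λ/λ and, for all u ∈ (0,λ], G(u) ≥ u/λ if and only if u ≤ u_λ. Then the sequence defined by t_0 = u_λ and t_{n+1} = τ(t_n) is well defined and converges to τ*. -/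
open Filter Set

/-- connection between the BKY06(λ) iteration (thresholds `τ(t)`,
started at the BH95 threshold `u_λ` at level `λ`) and the BR08(λ) procedure
(threshold `τ*`): the iteration `t₀ = u_λ`, `t_{n+1} = τ(t_n)` stays in `(0,λ]`
and converges to `τ*`. -/
theorem stmt_16 (α lam : ℝ) (G : ℝ → ℝ) (τs ulam : ℝ) (τ : ℝ → ℝ)
    (hα : α ∈ Set.Ioo (0:ℝ) 1) (hlam : lam ∈ Set.Ioo (0:ℝ) 1)
    (hGc : ContinuousOn G (Set.Icc 0 1))
    (hGmono : MonotoneOn G (Set.Icc 0 1))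
    (hG0 : G 0 = 0)
    (hGratio : AntitoneOn (fun u => G u / u) (Set.Ioo (0:ℝ) 1))
    (hτs : τs ∈ Set.Ioc (0:ℝ) lam)
    (hcross : G τs = τs * (1 - G τs) / (α * (1 - lam)))
    (huniq : ∀ u ∈ Set.Ioc (0:ℝ) lam, G u = u * (1 - G u) / (α * (1 - lam)) → u = τs)
    (hiff : ∀ u ∈ Set.Ioc (0:ℝ) lam,
      (G u ≥ u * (1 - G u) / (α * (1 - lam)) ↔ u ≤ τs))
    (hτ : ∀ t ∈ Set.Ioc (0:ℝ) lam,
      τ t ∈ Set.Ioo (0:ℝ) 1 ∧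
      G (τ t) / τ t = (1 - G t) / (α * (1 - lam)) ∧
      (∀ u ∈ Set.Ioo (0:ℝ) 1, G u / u = (1 - G t) / (α * (1 - lam)) → u = τ t) ∧
      (∀ u ∈ Set.Ioo (0:ℝ) 1, (G u / u ≥ (1 - G t) / (α * (1 - lam)) ↔ u ≤ τ t)))
    (hulam : ulam ∈ Set.Ioc (0:ℝ) lam)
    (hulamcross : G ulam = ulam / lam)
    (hulamiff : ∀ u ∈ Set.Ioc (0:ℝ) lam, (G u ≥ u / lam ↔ u ≤ ulam)) :
    ∀ s : ℕ → ℝ, s 0 = ulam → (∀ n, s (n + 1) = τ (s n)) →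
      (∀ n, s n ∈ Set.Ioc (0:ℝ) lam) ∧
      Filter.Tendsto s Filter.atTop (nhds τs) := by
  obtain ⟨hα0, hα1⟩ := hα
  obtain ⟨hlam0, hlam1⟩ := hlam
  have hc : 0 < α * (1 - lam) := mul_pos hα0 (by linarith)
  have hτs0 : 0 < τs := hτs.1
  have hτslam : τs ≤ lam := hτs.2
  have hτsIoo : τs ∈ Set.Ioo (0:ℝ) 1 := ⟨hτs0, lt_of_le_of_lt hτslam hlam1⟩
  -- τ fixes τs
  have hfix : τ τs = τs := by
    obtain ⟨_, _, huniq', _⟩ := hτ τs hτs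
    have h1 : G τs / τs = (1 - G τs) / (α * (1 - lam)) := by
      have hcr := hcross
      rw [eq_div_iff hc.ne'] at hcr
      rw [div_eq_div_iff hτs0.ne' hc.ne']
      linear_combination hcr
    exact (huniq' τs hτsIoo h1).symm
  -- key equivalence: for t ∈ (0,lam], t ≤ τ t ↔ t ≤ τs
  have hkey : ∀ t ∈ Set.Ioc (0:ℝ) lam, (t ≤ τ t ↔ t ≤ τs) := by
    intro t ht
    obtain ⟨_, _, _, hiff'⟩ := hτ t ht
    have htIoo1 : t ∈ Set.Ioo (0:ℝ) 1 := ⟨ht.1, lt_of_le_of_lt ht.2 hlam1⟩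
    rw [← hiff' t htIoo1, ← hiff t ht]
    have heq : (1 - G t) / (α * (1 - lam)) * t = t * (1 - G t) / (α * (1 - lam)) := by
      ring
    rw [ge_iff_le, ge_iff_le, le_div_iff₀ ht.1, heq]
  -- monotonicity of τ
  have hmonoτ : ∀ t ∈ Set.Ioc (0:ℝ) lam, ∀ t' ∈ Set.Ioc (0:ℝ) lam,
      t ≤ t' → τ t ≤ τ t' := by
    intro t ht t' ht' htt'
    obtain ⟨htIoo, hcr, _, _⟩ := hτ t ht
    obtain ⟨_, _, _, hiff'⟩ := hτ t' ht'
    have hGle : G t ≤ G t' :=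
      hGmono ⟨ht.1.le, le_trans ht.2 hlam1.le⟩ ⟨ht'.1.le, le_trans ht'.2 hlam1.le⟩ htt'
    have h2 : G (τ t) / τ t ≥ (1 - G t') / (α * (1 - lam)) := by
      rw [hcr]
      exact (div_le_div_iff_of_pos_right hc).mpr (by linarith)
    exact (hiff' (τ t) htIoo).1 h2
  -- τ maps (0,lam] into itself
  have hmapsto : ∀ t ∈ Set.Ioc (0:ℝ) lam, τ t ∈ Set.Ioc (0:ℝ) lam := by
    intro t ht
    refine ⟨(hτ t ht).1.1, ?_⟩
    by_cases h : t ≤ τs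
    · calc τ t ≤ τ τs := hmonoτ t ht τs hτs h
        _ = τs := hfix
        _ ≤ lam := hτslam
    · push_neg at h
      have h2 : ¬ (t ≤ τ t) := by rw [hkey t ht]; linarith
      push_neg at h2
      linarith [ht.2]
  intro s hs0 hrec
  -- all iterates are in (0,lam]
  have hIoc : ∀ n, s n ∈ Set.Ioc (0:ℝ) lam := by
    intro n
    induction n with
    | zero => rw [hs0]; exact hulam
    | succ n ih => rw [hrec n]; exact hmapsto (s n) ih
  refine ⟨hIoc, ?_⟩
  -- limit identification
  have hlimit : ∀ L ∈ Set.Ioc (0:ℝ) lam, Tendsto s atTop (nhds L) → L = τs := by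
    intro L hL htend
    have hLIcc : L ∈ Set.Icc (0:ℝ) 1 := ⟨hL.1.le, le_trans hL.2 hlam1.le⟩
    have hsin : Tendsto s atTop (nhdsWithin L (Set.Icc 0 1)) :=
      tendsto_nhdsWithin_iff.mpr ⟨htend, Filter.Eventually.of_forall
        (fun n => ⟨(hIoc n).1.le, le_trans (hIoc n).2 hlam1.le⟩)⟩
    have hGs : Tendsto (fun n => G (s n)) atTop (nhds (G L)) :=
      ((hGc L hLIcc).tendsto).comp hsin
    have hshift : Tendsto (fun n : ℕ => n + 1) atTop atTop := tendsto_add_atTop_nat 1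
    have htend' : Tendsto (fun n => s (n + 1)) atTop (nhds L) := htend.comp hshift
    have hGs' : Tendsto (fun n => G (s (n + 1))) atTop (nhds (G L)) := hGs.comp hshift
    have hdiv : Tendsto (fun n => G (s (n + 1)) / s (n + 1)) atTop (nhds (G L / L)) :=
      hGs'.div htend' hL.1.ne'
    have heqfun : (fun n => G (s (n + 1)) / s (n + 1)) =
        fun n => (1 - G (s n)) / (α * (1 - lam)) := by
      funext n
      rw [hrec n]
      exact (hτ (s n) (hIoc n)).2.1
    have hdiv2 : Tendsto (fun n => (1 - G (s n)) / (α * (1 - lam))) atTop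
        (nhds ((1 - G L) / (α * (1 - lam)))) :=
      (tendsto_const_nhds.sub hGs).div_const _
    rw [heqfun] at hdiv
    have hGL : G L / L = (1 - G L) / (α * (1 - lam)) := tendsto_nhds_unique hdiv hdiv2
    have hGL2 : G L = (1 - G L) / (α * (1 - lam)) * L := (div_eq_iff hL.1.ne').mp hGL
    exact huniq L hL (by linear_combination hGL2)
  by_cases hcase : ulam ≤ τs
  · -- increasing case
    have hle : ∀ n, s n ≤ τs := by
      intro n
      induction n with
      | zero => rw [hs0]; exact hcase
      | succ n ih =>
        rw [hrec n]
        calc τ (s n) ≤ τ τs := hmonoτ (s n) (hIoc n) τs hτs ih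
          _ = τs := hfix
    have hmono : Monotone s := by
      apply monotone_nat_of_le_succ
      intro n
      rw [hrec n]
      exact (hkey (s n) (hIoc n)).2 (hle n)
    have hbdd : BddAbove (Set.range s) := ⟨τs, by rintro x ⟨n, rfl⟩; exact hle n⟩
    have htend : Tendsto s atTop (nhds (⨆ n, s n)) := tendsto_atTop_ciSup hmono hbdd
    have hLmem : (⨆ n, s n) ∈ Set.Ioc (0:ℝ) lam := by
      constructor
      · exact lt_of_lt_of_le (hIoc 0).1 (le_ciSup hbdd 0)
      · exact le_trans (ciSup_le fun n => hle n) hτslam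
    have := hlimit _ hLmem htend
    rwa [this] at htend
  · -- decreasing case
    push_neg at hcase
    have hge : ∀ n, τs ≤ s n := by
      intro n
      induction n with
      | zero => rw [hs0]; exact hcase.le
      | succ n ih =>
        rw [hrec n]
        calc τs = τ τs := hfix.symm
          _ ≤ τ (s n) := hmonoτ τs hτs (s n) (hIoc n) ih
    have hanti : Antitone s := by
      apply antitone_nat_of_succ_le
      intro n
      rw [hrec n]
      by_cases h : s n ≤ τs
      · have : s n = τs := le_antisymm h (hge n)
        rw [this, hfix]
      · push_neg at h
        have h2 : ¬ (s n ≤ τ (s n)) := by rw [hkey (s n) (hIoc n)]; linarith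
        push_neg at h2
        exact h2.le
    have hbdd : BddBelow (Set.range s) := ⟨τs, by rintro x ⟨n, rfl⟩; exact hge n⟩
    have htend : Tendsto s atTop (nhds (⨅ n, s n)) := tendsto_atTop_ciInf hanti hbdd
    have hLmem : (⨅ n, s n) ∈ Set.Ioc (0:ℝ) lam := by
      constructor
      · exact lt_of_lt_of_le hτs0 (le_ciInf fun n => hge n)
      · exact le_trans (ciInf_le hbdd 0) (hIoc 0).2
    have := hlimit _ hLmem htend
    rwa [this] at htend
end

section
/- Let π0 ∈ [0,1] and let G1 : [0,1] → ℝ be a nondecreasing concave function with G1(0) = 0 and G1(1) = 1; set G(u) = π0·u + (1−π0)·G1(u). Then the map λ ↦ (1−G(λ))/(1−λ) is nonincreasing on [0,1), and for every λ ∈ [0,1) one has π0 ≤ (1−G(λ))/(1−λ) ≤ 1. -/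
open Set

/-!
For concave `G` with `G 1 = 1`, the ratio `(1 - G λ)/(1 - λ)` is the slope of the chord of `G`
from `λ` to `1`, hence nonincreasing; at `λ = 0` it equals `1` because `G 0 = 0`. The mixture
`G = π0·id + (1−π0)·G1` inherits concavity and both boundary values from `G1`, and
`1 - G λ - π0 (1 - λ) = (1 - π0)(1 - G1 λ) ≥ 0` since `G1 λ ≤ G1 1 = 1`.
-/

lemma ConcaveOn.mixture_id {s : Set ℝ} (hs : Convex ℝ s) {π0 : ℝ} (hπ0 : π0 ≤ 1)
    {G1 : ℝ → ℝ} (hG1 : ConcaveOn ℝ s G1) :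
    ConcaveOn ℝ s (fun u => π0 * u + (1 - π0) * G1 u) :=
  ((LinearMap.mulLeft ℝ π0).concaveOn hs).add (hG1.smul (sub_nonneg.2 hπ0))

lemma one_sub_div_one_sub_eq_slope {G : ℝ → ℝ} (hG1 : G 1 = 1) :
    (fun l => (1 - G l) / (1 - l)) = slope G 1 := by
  rw [slope_fun_def_field, hG1]
  funext l
  rw [← neg_div_neg_eq, neg_sub, neg_sub]

lemma ConcaveOn.antitoneOn_one_sub_div_one_sub {G : ℝ → ℝ} (hG : ConcaveOn ℝ (Icc 0 1) G)
    (hG1 : G 1 = 1) : AntitoneOn (fun l => (1 - G l) / (1 - l)) (Ico 0 1) := by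
  rw [one_sub_div_one_sub_eq_slope hG1]
  exact (hG.antitoneOn_slope_lt (right_mem_Icc.2 zero_le_one)).mono
    fun l hl => ⟨Ico_subset_Icc_self hl, hl.2⟩

lemma ConcaveOn.one_sub_div_one_sub_le_one {G : ℝ → ℝ} (hG : ConcaveOn ℝ (Icc 0 1) G)
    (hG0 : G 0 = 0) (hG1 : G 1 = 1) {l : ℝ} (hl : l ∈ Ico 0 1) :
    (1 - G l) / (1 - l) ≤ 1 := by
  have h := hG.antitoneOn_one_sub_div_one_sub hG1 (left_mem_Ico.2 zero_lt_one) hl hl.1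
  simpa [hG0] using h

lemma le_one_sub_mixture_div_one_sub {π0 g l : ℝ} (hπ0 : π0 ≤ 1) (hg : g ≤ 1)
    (hl : l < 1) :
    π0 ≤ (1 - (π0 * l + (1 - π0) * g)) / (1 - l) := by
  rw [le_div_iff₀ (sub_pos.2 hl)]
  nlinarith

/-- in the two-group mixture model `G = π0·id + (1−π0)·G1` with `G1`
nondecreasing, concave, `G1(0) = 0`, `G1(1) = 1`, the map
`λ ↦ (1−G(λ))/(1−λ)` is nonincreasing on `[0,1)` and takes values in `[π0, 1]`. -/
theorem stmt_18 (π0 : ℝ) (G1 : ℝ → ℝ)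
    (hπ0 : π0 ∈ Set.Icc (0:ℝ) 1)
    (hmono : MonotoneOn G1 (Set.Icc 0 1))
    (hconc : ConcaveOn ℝ (Set.Icc (0:ℝ) 1) G1)
    (h0 : G1 0 = 0) (h1 : G1 1 = 1) :
    AntitoneOn (fun l => (1 - (π0 * l + (1 - π0) * G1 l)) / (1 - l)) (Set.Ico (0:ℝ) 1) ∧
    ∀ l ∈ Set.Ico (0:ℝ) 1,
      π0 ≤ (1 - (π0 * l + (1 - π0) * G1 l)) / (1 - l) ∧
      (1 - (π0 * l + (1 - π0) * G1 l)) / (1 - l) ≤ 1 := by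
  have hG := hconc.mixture_id (convex_Icc 0 1) hπ0.2
  have hG0 : π0 * 0 + (1 - π0) * G1 0 = 0 := by simp [h0]
  have hG1 : π0 * 1 + (1 - π0) * G1 1 = 1 := by simp [h1]
  refine ⟨hG.antitoneOn_one_sub_div_one_sub hG1, fun l hl =>
    ⟨?_, hG.one_sub_div_one_sub_le_one hG0 hG1 hl⟩⟩
  have hG1l : G1 l ≤ 1 :=
    h1 ▸ hmono (Ico_subset_Icc_self hl) (right_mem_Icc.2 zero_le_one) hl.2.le
  exact le_one_sub_mixture_div_one_sub hπ0.2 hG1l hl.2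
end
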